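/- Let Ω be a locally compact Hausdorff space, φ : Ω → Ω a homeomorphism, and let Γ and Λ be nondegenerate Banach modules over C₀(Ω) equipped with U₀(Ω)-valued norms N_Γ and N_Λ respectively. For a bounded linear operator T : Γ → Λ the following are equivalent: (a) T(f•s) = (f∘φ⁻¹)•(T s) for all f ∈ C₀(Ω) and s ∈ Γ; (b) supp(T s) ⊆ φ(supp(s)) for every s ∈ Γ; (c) N_Λ(T s)(x) ≤ ‖T‖ · N_Γ(s)(φ⁻¹(x)) for every s ∈ Γ and x ∈ Ω; (d) there exists m > 0 such that N_Λ(T s)(x) ≤ m · N_Γ(s)(φ⁻¹(x)) for every s ∈ Γ and x ∈ Ω. -/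

import Mathlib

open scoped ZeroAtInfty

noncomputable section

variable {𝕜 : Type*} [RCLike 𝕜] {Ω : Type*} [TopologicalSpace Ω]

/-- A Banach module structure over `C₀(Ω, 𝕜)` on a `𝕜`-Banach space `Γ`. -/
structure C0Module (𝕜 : Type*) [RCLike 𝕜] (Ω : Type*) [TopologicalSpace Ω]
    (Γ : Type*) [NormedAddCommGroup Γ] [NormedSpace 𝕜 Γ] where
  smul : C₀(Ω, 𝕜) →L[𝕜] Γ →L[𝕜] Γ
  mul_smul : ∀ (f g : C₀(Ω, 𝕜)) (s : Γ), smul (f * g) s = smul f (smul g s)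
  norm_smul_le : ∀ (f : C₀(Ω, 𝕜)) (s : Γ), ‖smul f s‖ ≤ ‖f‖ * ‖s‖

variable {Γ : Type*} [NormedAddCommGroup Γ] [NormedSpace 𝕜 Γ]

/-- Nondegeneracy of a Banach module over `C₀(Ω, 𝕜)`. -/
def C0Module.Nondegenerate (M : C0Module 𝕜 Ω Γ) : Prop :=
  Dense (Submodule.span 𝕜 {x : Γ | ∃ (f : C₀(Ω, 𝕜)) (s : Γ), M.smul f s = x} : Set Γ)

/-- The inclusion `C₀(Ω, ℝ) ⊆ C₀(Ω, 𝕜)`. -/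
def ofRealC0 (𝕜 : Type*) [RCLike 𝕜] {Ω : Type*} [TopologicalSpace Ω] (f : C₀(Ω, ℝ)) :
    C₀(Ω, 𝕜) where
  toFun := fun x => (f x : 𝕜)
  continuous_toFun := RCLike.continuous_ofReal.comp f.continuous
  zero_at_infty' := by
    have h2 : Filter.Tendsto (fun r : ℝ => (r : 𝕜)) (nhds 0) (nhds 0) := by
      simpa using (RCLike.continuous_ofReal (K := 𝕜)).tendsto 0
    exact h2.comp f.zero_at_infty'

/-- The pointwise maximum of two functions in `C₀(Ω, ℝ)`. -/
def supC0 (f g : C₀(Ω, ℝ)) : C₀(Ω, ℝ) where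
  toFun := fun x => max (f x) (g x)
  continuous_toFun := f.continuous.max g.continuous
  zero_at_infty' := by simpa using f.zero_at_infty'.max g.zero_at_infty'

/-- The AM-identity: `‖(f₁ ⊔ f₂) • s‖ = max ‖f₁ • s‖ ‖f₂ • s‖` for nonnegative real-valued
`f₁, f₂ ∈ C₀(Ω, ℝ)`. -/
def C0Module.IsAM (M : C0Module 𝕜 Ω Γ) : Prop :=
  ∀ (f₁ f₂ : C₀(Ω, ℝ)), (∀ x, 0 ≤ f₁ x) → (∀ x, 0 ≤ f₂ x) → ∀ s : Γ,
    ‖M.smul (ofRealC0 𝕜 (supC0 f₁ f₂)) s‖ =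
      max ‖M.smul (ofRealC0 𝕜 f₁) s‖ ‖M.smul (ofRealC0 𝕜 f₂) s‖

/-- A `U₀(Ω)`-valued norm on a Banach module `Γ` over `C₀(Ω, 𝕜)`. -/
structure IsU0Norm (M : C0Module 𝕜 Ω Γ) (N : Γ → Ω → ℝ) : Prop where
  nonneg : ∀ (s : Γ) (x : Ω), 0 ≤ N s x
  upperSemicontinuous : ∀ s : Γ, UpperSemicontinuous (N s)
  zero_at_infty : ∀ s : Γ, ∀ ε > 0, ∃ K : Set Ω, IsCompact K ∧ ∀ x ∉ K, N s x ≤ ε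
  sup_eq_norm : ∀ s : Γ, (⨆ x : Ω, N s x) = ‖s‖
  smul_eq : ∀ (f : C₀(Ω, 𝕜)) (s : Γ) (x : Ω), N (M.smul f s) x = ‖f x‖ * N s x
  subadd : ∀ (s₁ s₂ : Γ) (x : Ω), N (s₁ + s₂) x ≤ N s₁ x + N s₂ x

/-- The canonical candidate for the `U₀(Ω)`-valued norm. -/
def normFormula (M : C0Module 𝕜 Ω Γ) (s : Γ) (x : Ω) : ℝ :=
  sInf {r : ℝ | ∃ f : C₀(Ω, ℝ), (∀ y, 0 ≤ f y) ∧ f x = 1 ∧ r = ‖M.smul (ofRealC0 𝕜 f) s‖}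


/-- The support of `s` in `Ω`. -/
def C0Module.support (M : C0Module 𝕜 Ω Γ) (s : Γ) : Set Ω :=
  {x : Ω | ∀ f : C₀(Ω, 𝕜), f x ≠ 0 → M.smul f s ≠ 0}

/-- The Koopman operator of a homeomorphism `φ` of `Ω` : `f ↦ f ∘ φ⁻¹`. -/
def koopman (φ : Ω ≃ₜ Ω) (f : C₀(Ω, 𝕜)) : C₀(Ω, 𝕜) :=
  f.comp φ.symm.toCocompactMap

section AuxLemmas

@[simp] lemma ofRealC0_apply (f : C₀(Ω, ℝ)) (x : Ω) : ofRealC0 𝕜 f x = (f x : 𝕜) := rfl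

lemma ofRealC0_mul (f g : C₀(Ω, ℝ)) :
    ofRealC0 𝕜 (f * g) = ofRealC0 𝕜 f * ofRealC0 𝕜 g := by
  ext x; simp

lemma c0_norm_le {f : C₀(Ω, 𝕜)} {C : ℝ} (hC : 0 ≤ C) (h : ∀ x, ‖f x‖ ≤ C) : ‖f‖ ≤ C := by
  rw [← ZeroAtInftyContinuousMap.norm_toBCF_eq_norm]
  exact (BoundedContinuousFunction.norm_le hC).mpr h

@[simp] lemma koopman_apply (φ : Ω ≃ₜ Ω) (f : C₀(Ω, 𝕜)) (x : Ω) :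
    koopman φ f x = f (φ.symm x) := rfl

lemma koopman_mul (φ : Ω ≃ₜ Ω) (f g : C₀(Ω, 𝕜)) :
    koopman φ (f * g) = koopman φ f * koopman φ g := by ext x; simp

lemma koopman_sub (φ : Ω ≃ₜ Ω) (f g : C₀(Ω, 𝕜)) :
    koopman φ (f - g) = koopman φ f - koopman φ g := by ext x; simp

lemma koopman_smul (φ : Ω ≃ₜ Ω) (c : 𝕜) (f : C₀(Ω, 𝕜)) :
    koopman φ (c • f) = c • koopman φ f := by ext x; simp

/-- A compactly supported continuous map as an element of `C₀`. -/
def mkC0 (f : C(Ω, ℝ)) (hf : HasCompactSupport f) : C₀(Ω, ℝ) :=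
  ⟨f, hf.is_zero_at_infty⟩

@[simp] lemma mkC0_apply (f : C(Ω, ℝ)) (hf : HasCompactSupport f) (x : Ω) :
    mkC0 f hf x = f x := rfl

/-- Two-level bump functions around a point. -/
lemma exists_bump [LocallyCompactSpace Ω] [T2Space Ω] {V : Set Ω} (hV : IsOpen V) {y : Ω}
    (hy : y ∈ V) :
    ∃ g' g : C₀(Ω, ℝ), (∀ w, g' w ∈ Set.Icc (0:ℝ) 1) ∧ g' y = 1 ∧ (∀ w ∉ V, g' w = 0) ∧
      g y = 1 ∧ ∀ w, g w * g' w = g w := by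
  obtain ⟨K, hK, hyK, hKV⟩ := exists_compact_subset hV hy
  obtain ⟨p, hp1, hp0, hpc, hpicc⟩ := exists_continuous_one_zero_of_isCompact hK
    hV.isClosed_compl (Set.disjoint_left.mpr fun w hw hw' => hw' (hKV hw))
  obtain ⟨q, hq1, hq0, hqc, hqicc⟩ := exists_continuous_one_zero_of_isCompact
    (isCompact_singleton : IsCompact {y}) isOpen_interior.isClosed_compl
    (Set.disjoint_left.mpr fun w hw hw' => hw' (by rwa [Set.mem_singleton_iff.mp hw]))
  refine ⟨mkC0 p hpc, mkC0 q hqc, fun w => hpicc w, hp1 (interior_subset hyK), ?_, hq1 rfl, ?_⟩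
  · intro w hw; exact hp0 hw
  · intro w
    by_cases hqw : q w = 0
    · simp [hqw]
    · have hw : w ∈ interior K := by
        by_contra h; exact hqw (hq0 h)
      simp [hp1 (interior_subset hw)]

variable {M : C0Module 𝕜 Ω Γ} {N : Γ → Ω → ℝ}

lemma IsU0Norm.N_zero (hN : IsU0Norm M N) (x : Ω) : N 0 x = 0 := by
  have h := hN.smul_eq 0 0 x
  have h0 : M.smul (0 : C₀(Ω, 𝕜)) (0 : Γ) = (0 : Γ) := by simp
  rw [h0] at h
  simpa using h

lemma IsU0Norm.N_le_norm (hN : IsU0Norm M N) (s : Γ) (x : Ω) : N s x ≤ ‖s‖ := by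
  by_cases hb : BddAbove (Set.range (N s))
  · rw [← hN.sup_eq_norm s]
    exact le_ciSup hb x
  · have h0 : ‖s‖ = 0 := by rw [← hN.sup_eq_norm s, Real.iSup_of_not_bddAbove hb]
    have hs : s = 0 := norm_eq_zero.mp h0
    subst hs
    exact absurd ⟨0, by rintro r ⟨z, rfl⟩; exact le_of_eq (hN.N_zero z)⟩ hb

lemma IsU0Norm.N_le_add_norm (hN : IsU0Norm M N) (a b : Γ) (x : Ω) :
    N a x ≤ N b x + ‖a - b‖ := by
  calc N a x = N (b + (a - b)) x := by rw [add_sub_cancel]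
  _ ≤ N b x + N (a - b) x := hN.subadd _ _ x
  _ ≤ N b x + ‖a - b‖ := add_le_add_right (hN.N_le_norm _ x) _

/-- Approximate identity property of nondegenerate Banach modules. -/
lemma C0Module.Nondegenerate.approxId [LocallyCompactSpace Ω] [T2Space Ω]
    {M : C0Module 𝕜 Ω Γ} (hM : M.Nondegenerate) (v : Γ) {ε : ℝ} (hε : 0 < ε) :
    ∃ p : C₀(Ω, ℝ), (∀ w, p w ∈ Set.Icc (0:ℝ) 1) ∧
      ‖v - M.smul (ofRealC0 𝕜 p) v‖ ≤ ε := by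
  obtain ⟨w, hw_mem, hw_close⟩ := hM.exists_dist_lt v (by positivity : (0:ℝ) < ε/3)
  rw [dist_eq_norm] at hw_close
  have key : ∀ u ∈ Submodule.span 𝕜 {x : Γ | ∃ (f : C₀(Ω, 𝕜)) (s : Γ), M.smul f s = x},
      ∀ δ : ℝ, 0 < δ →
      ∃ K : Set Ω, IsCompact K ∧ ∀ p : C₀(Ω, ℝ), (∀ t, p t ∈ Set.Icc (0:ℝ) 1) →
        (∀ t ∈ K, p t = 1) → ‖u - M.smul (ofRealC0 𝕜 p) u‖ ≤ δ := by
    intro u hu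
    induction hu using Submodule.span_induction with
    | mem x hx =>
      obtain ⟨f, s, rfl⟩ := hx
      intro δ hδ
      have hδ' : (0:ℝ) < δ / (‖s‖ + 1) := by positivity
      have h1 : f ⁻¹' Metric.ball 0 (δ / (‖s‖ + 1)) ∈ Filter.cocompact Ω :=
        zero_at_infty f (Metric.ball_mem_nhds 0 hδ')
      obtain ⟨K, hK, hKsub⟩ := Filter.mem_cocompact.mp h1
      refine ⟨K, hK, fun p hpicc hp1 => ?_⟩
      have heq : M.smul f s - M.smul (ofRealC0 𝕜 p) (M.smul f s)
          = M.smul (f - ofRealC0 𝕜 p * f) s := by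
        rw [map_sub, ContinuousLinearMap.sub_apply, ← M.mul_smul]
      rw [heq]
      have hnorm : ‖f - ofRealC0 𝕜 p * f‖ ≤ δ / (‖s‖ + 1) := by
        apply c0_norm_le hδ'.le
        intro z
        have hval : (f - ofRealC0 𝕜 p * f) z = (1 - ((p z : ℝ) : 𝕜)) * f z := by
          simp [sub_mul]
        rw [hval, norm_mul]
        by_cases hz : z ∈ K
        · rw [hp1 z hz]
          simp [hδ'.le]
        · have hfz : ‖f z‖ < δ / (‖s‖ + 1) := by
            have := hKsub (Set.mem_compl hz)
            simpa [mem_ball_zero_iff] using this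
          have h1p : ‖(1 : 𝕜) - ((p z : ℝ) : 𝕜)‖ ≤ 1 := by
            have : (1 : 𝕜) - ((p z : ℝ) : 𝕜) = (((1 - p z : ℝ)) : 𝕜) := by push_cast; ring
            rw [this, RCLike.norm_ofReal, abs_le]
            constructor <;> nlinarith [(hpicc z).1, (hpicc z).2]
          calc ‖(1 : 𝕜) - ((p z : ℝ) : 𝕜)‖ * ‖f z‖ ≤ 1 * ‖f z‖ :=
                mul_le_mul_of_nonneg_right h1p (norm_nonneg _)
          _ ≤ δ / (‖s‖ + 1) := by rw [one_mul]; exact hfz.le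
      calc ‖M.smul (f - ofRealC0 𝕜 p * f) s‖ ≤ ‖f - ofRealC0 𝕜 p * f‖ * ‖s‖ :=
            M.norm_smul_le _ _
      _ ≤ (δ / (‖s‖ + 1)) * (‖s‖ + 1) := by
          apply mul_le_mul hnorm (by linarith) (norm_nonneg s) hδ'.le
      _ = δ := by field_simp
    | zero =>
      intro δ hδ
      exact ⟨∅, isCompact_empty, fun p _ _ => by simp [hδ.le]⟩
    | add x y hx hy ihx ihy =>
      intro δ hδ
      obtain ⟨K₁, hK₁, h₁⟩ := ihx (δ/2) (by positivity)
      obtain ⟨K₂, hK₂, h₂⟩ := ihy (δ/2) (by positivity)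
      refine ⟨K₁ ∪ K₂, hK₁.union hK₂, fun p hpicc hp1 => ?_⟩
      have heq : x + y - M.smul (ofRealC0 𝕜 p) (x + y)
          = (x - M.smul (ofRealC0 𝕜 p) x) + (y - M.smul (ofRealC0 𝕜 p) y) := by
        rw [map_add]; abel
      rw [heq]
      calc ‖(x - M.smul (ofRealC0 𝕜 p) x) + (y - M.smul (ofRealC0 𝕜 p) y)‖
          ≤ ‖x - M.smul (ofRealC0 𝕜 p) x‖ + ‖y - M.smul (ofRealC0 𝕜 p) y‖ := norm_add_le _ _
      _ ≤ δ/2 + δ/2 := add_le_add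
            (h₁ p hpicc fun t ht => hp1 t (Set.mem_union_left _ ht))
            (h₂ p hpicc fun t ht => hp1 t (Set.mem_union_right _ ht))
      _ = δ := by ring
    | smul c x hx ih =>
      intro δ hδ
      have hδ' : (0:ℝ) < δ / (‖c‖ + 1) := by positivity
      obtain ⟨K, hK, hKp⟩ := ih (δ / (‖c‖ + 1)) hδ'
      refine ⟨K, hK, fun p hpicc hp1 => ?_⟩
      have heq : c • x - M.smul (ofRealC0 𝕜 p) (c • x)
          = c • (x - M.smul (ofRealC0 𝕜 p) x) := by
        rw [map_smul, smul_sub]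
      rw [heq, norm_smul]
      calc ‖c‖ * ‖x - M.smul (ofRealC0 𝕜 p) x‖ ≤ ‖c‖ * (δ / (‖c‖ + 1)) :=
            mul_le_mul_of_nonneg_left (hKp p hpicc hp1) (norm_nonneg c)
      _ ≤ (‖c‖ + 1) * (δ / (‖c‖ + 1)) := by
          apply mul_le_mul_of_nonneg_right (by linarith) hδ'.le
      _ = δ := by field_simp
  obtain ⟨K, hK, hKp⟩ := key w hw_mem (ε/3) (by positivity)
  obtain ⟨p, hp1, _, hpc, hpicc⟩ := exists_continuous_one_zero_of_isCompact hK
    isClosed_empty (by simp)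
  refine ⟨mkC0 p hpc, fun t => hpicc t, ?_⟩
  have hPnorm : ‖ofRealC0 𝕜 (mkC0 p hpc)‖ ≤ 1 := by
    apply c0_norm_le zero_le_one
    intro z
    rw [ofRealC0_apply, RCLike.norm_ofReal, mkC0_apply, abs_le]
    constructor <;> nlinarith [(hpicc z).1, (hpicc z).2]
  have heq : v - M.smul (ofRealC0 𝕜 (mkC0 p hpc)) v
      = (v - w) - M.smul (ofRealC0 𝕜 (mkC0 p hpc)) (v - w)
        + (w - M.smul (ofRealC0 𝕜 (mkC0 p hpc)) w) := by
    rw [map_sub]; abel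
  rw [heq]
  have h2 : ‖M.smul (ofRealC0 𝕜 (mkC0 p hpc)) (v - w)‖ ≤ ε/3 := by
    calc ‖M.smul (ofRealC0 𝕜 (mkC0 p hpc)) (v - w)‖
        ≤ ‖ofRealC0 𝕜 (mkC0 p hpc)‖ * ‖v - w‖ := M.norm_smul_le _ _
    _ ≤ 1 * (ε/3) := mul_le_mul hPnorm hw_close.le (norm_nonneg _)
          (le_trans (norm_nonneg _) hPnorm)
    _ = ε/3 := one_mul _
  have h3 : ‖w - M.smul (ofRealC0 𝕜 (mkC0 p hpc)) w‖ ≤ ε/3 :=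
    hKp (mkC0 p hpc) (fun t => hpicc t) (fun t ht => hp1 ht)
  calc ‖(v - w) - M.smul (ofRealC0 𝕜 (mkC0 p hpc)) (v - w)
        + (w - M.smul (ofRealC0 𝕜 (mkC0 p hpc)) w)‖
      ≤ ‖(v - w) - M.smul (ofRealC0 𝕜 (mkC0 p hpc)) (v - w)‖
        + ‖w - M.smul (ofRealC0 𝕜 (mkC0 p hpc)) w‖ := norm_add_le _ _
  _ ≤ (‖v - w‖ + ‖M.smul (ofRealC0 𝕜 (mkC0 p hpc)) (v - w)‖) + ε/3 :=
        add_le_add (norm_sub_le _ _) h3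
  _ ≤ (ε/3 + ε/3) + ε/3 := by
        exact add_le_add (add_le_add hw_close.le h2) le_rfl
  _ = ε := by ring

/-- Scalar quasi-homogeneity of a `U₀`-valued norm on a nondegenerate module. -/
lemma IsU0Norm.smul_scalar_le [LocallyCompactSpace Ω] [T2Space Ω]
    {M : C0Module 𝕜 Ω Γ} (hM : M.Nondegenerate) {N : Γ → Ω → ℝ} (hN : IsU0Norm M N)
    (c : 𝕜) (v : Γ) (x : Ω) : N (c • v) x ≤ ‖c‖ * N v x := by
  by_cases hc : c = 0
  · subst hc; simp [hN.N_zero x, hN.nonneg]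
  refine le_of_forall_pos_le_add (fun ε hε => ?_)
  have hc' : (0:ℝ) < ‖c‖ := norm_pos_iff.mpr hc
  obtain ⟨p, hpicc, hp⟩ := hM.approxId v (by positivity : (0:ℝ) < ε / ‖c‖)
  have heq : M.smul (c • ofRealC0 𝕜 p) v = c • M.smul (ofRealC0 𝕜 p) v := by
    rw [map_smul, ContinuousLinearMap.smul_apply]
  calc N (c • v) x ≤ N (M.smul (c • ofRealC0 𝕜 p) v) x
        + ‖c • v - M.smul (c • ofRealC0 𝕜 p) v‖ := hN.N_le_add_norm _ _ x
  _ = ‖(c • ofRealC0 𝕜 p) x‖ * N v x + ‖c • (v - M.smul (ofRealC0 𝕜 p) v)‖ := by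
        rw [hN.smul_eq, heq, ← smul_sub]
  _ ≤ ‖c‖ * N v x + ε := by
        refine add_le_add ?_ ?_
        · have : ‖(c • ofRealC0 𝕜 p) x‖ = ‖c‖ * |p x| := by
            simp [norm_smul]
          rw [this]
          apply mul_le_mul_of_nonneg_right _ (hN.nonneg v x)
          calc ‖c‖ * |p x| ≤ ‖c‖ * 1 := by
                apply mul_le_mul_of_nonneg_left _ hc'.le
                rw [abs_le]
                constructor <;> nlinarith [(hpicc x).1, (hpicc x).2]
          _ = ‖c‖ := mul_one _
        · rw [norm_smul]
          calc ‖c‖ * ‖v - M.smul (ofRealC0 𝕜 p) v‖ ≤ ‖c‖ * (ε / ‖c‖) :=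
                mul_le_mul_of_nonneg_left hp hc'.le
          _ = ε := by field_simp

end AuxLemmas

set_option maxHeartbeats 2000000 in
/-- Characterization of `T_φ`-homomorphisms between `U₀(Ω)`-normed modules:
intertwining the module actions, shrinking of supports, and domination of the vector-valued
norms are equivalent. -/
theorem koopman_homomorphism_u0_tfae
    [LocallyCompactSpace Ω] [T2Space Ω]
    {Λ : Type*} [NormedAddCommGroup Λ] [NormedSpace 𝕜 Λ]
    [CompleteSpace Γ] [CompleteSpace Λ]
    (φ : Ω ≃ₜ Ω)
    (M : C0Module 𝕜 Ω Γ) (Mₗ : C0Module 𝕜 Ω Λ)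
    (hM : M.Nondegenerate) (hMₗ : Mₗ.Nondegenerate)
    (NΓ : Γ → Ω → ℝ) (hNΓ : IsU0Norm M NΓ)
    (NΛ : Λ → Ω → ℝ) (hNΛ : IsU0Norm Mₗ NΛ)
    (T : Γ →L[𝕜] Λ) :
    List.TFAE
      [∀ (f : C₀(Ω, 𝕜)) (s : Γ), T (M.smul f s) = Mₗ.smul (koopman φ f) (T s),
       ∀ s : Γ, Mₗ.support (T s) ⊆ φ '' (M.support s),
       ∀ (s : Γ) (x : Ω), NΛ (T s) x ≤ ‖T‖ * NΓ s (φ.symm x),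
       ∃ m : ℝ, 0 < m ∧ ∀ (s : Γ) (x : Ω), NΛ (T s) x ≤ m * NΓ s (φ.symm x)] := by
  tfae_have 1 → 2
  · intro h1 s x hx
    refine ⟨φ.symm x, ?_, φ.apply_symm_apply x⟩
    intro f hf
    intro hcontra
    have hk : koopman φ f x ≠ 0 := by simpa using hf
    exact hx (koopman φ f) hk (by rw [← h1, hcontra, map_zero])
  tfae_have 2 → 3
  · intro h2 s x
    set y := φ.symm x with hy
    have main : ∀ ε > (0:ℝ), NΛ (T s) x ≤ ‖T‖ * (NΓ s y + ε) := by
      intro ε hε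
      have hVopen : IsOpen {w : Ω | NΓ s w < NΓ s y + ε} :=
        (hNΓ.upperSemicontinuous s).isOpen_preimage (NΓ s y + ε)
      have hyV : y ∈ {w : Ω | NΓ s w < NΓ s y + ε} := by
        simp only [Set.mem_setOf_eq]; linarith
      obtain ⟨g', g, hicc, hg'y, hg'0, hgy, hgg'⟩ := exists_bump hVopen hyV
      set G' := ofRealC0 𝕜 g' with hG'
      set G := ofRealC0 𝕜 g with hG
      have hGG' : G * G' = G := by
        rw [hG, hG', ← ofRealC0_mul]
        congr 1
        ext w
        simpa using hgg' w
      set r := s - M.smul G' s with hr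
      have hGr : M.smul G r = 0 := by
        rw [hr, map_sub, ← M.mul_smul, hGG', sub_self]
      have hGyne : G y ≠ 0 := by
        rw [hG]; simp [hgy]
      -- `y` is not in the support of `r`
      have hyr : y ∉ M.support r := fun hmem => hmem G hGyne hGr
      -- hence `x` is not in the support of `T r`
      have hnx : x ∉ Mₗ.support (T r) := by
        intro hxr
        obtain ⟨z, hz, hzx⟩ := h2 r hxr
        have hzy : z = y := by
          rw [hy, ← hzx, φ.symm_apply_apply]
        rw [hzy] at hz
        exact hyr hz
      -- so `NΛ (T r) x = 0`
      have hNTr : NΛ (T r) x = 0 := by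
        have hex : ∃ k : C₀(Ω, 𝕜), k x ≠ 0 ∧ Mₗ.smul k (T r) = 0 := by
          by_contra hcon
          push_neg at hcon
          exact hnx (fun k hk => hcon k hk)
        obtain ⟨k, hk0, hk⟩ := hex
        have := hNΛ.smul_eq k (T r) x
        rw [hk, hNΛ.N_zero x] at this
        have hkn : ‖k x‖ ≠ 0 := norm_ne_zero_iff.mpr hk0
        field_simp at this
        exact (mul_eq_zero.mp this.symm).resolve_left hkn
      -- decompose
      have hdec : T s = T (M.smul G' s) + T r := by
        rw [hr, map_sub]; abel
      have hsub : NΛ (T s) x ≤ NΛ (T (M.smul G' s)) x + NΛ (T r) x := by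
        rw [hdec]; exact hNΛ.subadd _ _ x
      have hnorm1 : ‖M.smul G' s‖ ≤ NΓ s y + ε := by
        rw [← hNΓ.sup_eq_norm]
        apply Real.iSup_le _ (by have := hNΓ.nonneg s y; linarith)
        intro w
        rw [hNΓ.smul_eq]
        by_cases hw : NΓ s w < NΓ s y + ε
        · have h1 : ‖G' w‖ ≤ 1 := by
            rw [hG']; rw [ofRealC0_apply, RCLike.norm_ofReal, abs_le]
            constructor <;> nlinarith [(hicc w).1, (hicc w).2]
          calc ‖G' w‖ * NΓ s w ≤ 1 * (NΓ s y + ε) := by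
                apply mul_le_mul h1 hw.le (hNΓ.nonneg s w) zero_le_one
          _ = NΓ s y + ε := one_mul _
        · have : g' w = 0 := hg'0 w hw
          rw [hG', ofRealC0_apply, this]
          simp
          have := hNΓ.nonneg s y; linarith
      calc NΛ (T s) x ≤ NΛ (T (M.smul G' s)) x + NΛ (T r) x := hsub
      _ = NΛ (T (M.smul G' s)) x := by rw [hNTr, add_zero]
      _ ≤ ‖T (M.smul G' s)‖ := hNΛ.N_le_norm _ x
      _ ≤ ‖T‖ * ‖M.smul G' s‖ := T.le_opNorm _
      _ ≤ ‖T‖ * (NΓ s y + ε) := mul_le_mul_of_nonneg_left hnorm1 (norm_nonneg T)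
    refine le_of_forall_pos_le_add (fun δ hδ => ?_)
    have hδ' : (0:ℝ) < δ / (‖T‖ + 1) := by positivity
    calc NΛ (T s) x ≤ ‖T‖ * (NΓ s y + δ / (‖T‖ + 1)) := main _ hδ'
    _ = ‖T‖ * NΓ s y + ‖T‖ * (δ / (‖T‖ + 1)) := by ring
    _ ≤ ‖T‖ * NΓ s y + δ := by
        have h1 : ‖T‖ * (δ / (‖T‖ + 1)) ≤ (‖T‖ + 1) * (δ / (‖T‖ + 1)) := by
          apply mul_le_mul_of_nonneg_right (by linarith) hδ'.le
        have h2 : (‖T‖ + 1) * (δ / (‖T‖ + 1)) = δ := by field_simp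
        linarith
  tfae_have 3 → 4
  · intro h3
    refine ⟨‖T‖ + 1, by positivity, fun s x => ?_⟩
    calc NΛ (T s) x ≤ ‖T‖ * NΓ s (φ.symm x) := h3 s x
    _ ≤ (‖T‖ + 1) * NΓ s (φ.symm x) :=
        mul_le_mul_of_nonneg_right (by linarith) (hNΓ.nonneg s _)
  tfae_have 4 → 1
  · rintro ⟨m, hm0, h4⟩ f s
    set u := T (M.smul f s) - Mₗ.smul (koopman φ f) (T s) with hu
    have hpt : ∀ x : Ω, NΛ u x ≤ 0 := by
      intro x
      set y := φ.symm x with hy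
      obtain ⟨g', g, hicc, hg'y, _, hgy, hgg'⟩ := exists_bump isOpen_univ (Set.mem_univ y)
      set G' := ofRealC0 𝕜 g' with hG'
      set G := ofRealC0 𝕜 g with hG
      have hGG' : G * G' = G := by
        rw [hG, hG', ← ofRealC0_mul]
        congr 1
        ext w
        simpa using hgg' w
      set c := f y with hc
      have hG'y : G' y = 1 := by rw [hG']; simp [hg'y]
      have hGy : G y = 1 := by rw [hG]; simp [hgy]
      -- decomposition of u
      set b := T (M.smul G' s) - Mₗ.smul (koopman φ G') (T s) with hb
      have hexp : u = T (M.smul (f - c • G') s) + c • b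
          + Mₗ.smul (koopman φ (c • G' - f)) (T s) := by
        rw [hu, hb]
        simp only [map_sub, map_smul, ContinuousLinearMap.sub_apply,
          ContinuousLinearMap.smul_apply, koopman_sub, koopman_smul, smul_sub]
        abel
      have hsub : NΛ u x ≤ NΛ (T (M.smul (f - c • G') s) + c • b) x
          + NΛ (Mₗ.smul (koopman φ (c • G' - f)) (T s)) x := by
        rw [hexp]; exact hNΛ.subadd _ _ x
      have hsub2 : NΛ (T (M.smul (f - c • G') s) + c • b) x
          ≤ NΛ (T (M.smul (f - c • G') s)) x + NΛ (c • b) x := hNΛ.subadd _ _ x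
      -- term a
      have hterm_a : NΛ (T (M.smul (f - c • G') s)) x = 0 := by
        have hle := h4 (M.smul (f - c • G') s) x
        rw [hNΓ.smul_eq] at hle
        have hval : (f - c • G') y = 0 := by
          simp [hG'y, hc]
        rw [← hy] at hle
        rw [hval, norm_zero, zero_mul, mul_zero] at hle
        exact le_antisymm hle (hNΛ.nonneg _ x)
      -- term c
      have hterm_c : NΛ (Mₗ.smul (koopman φ (c • G' - f)) (T s)) x = 0 := by
        rw [hNΛ.smul_eq]
        have hval : koopman φ (c • G' - f) x = 0 := by
          rw [koopman_apply, ← hy]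
          simp [hG'y, hc]
        rw [hval]
        simp
      -- term b
      have hterm_b : NΛ b x = 0 := by
        have hkoop : koopman φ G * koopman φ G' = koopman φ G := by
          rw [← koopman_mul, hGG']
        have hGx : ‖koopman φ G x‖ = 1 := by
          rw [koopman_apply, ← hy, hGy]; simp
        have h5 : NΛ (Mₗ.smul (koopman φ G) b) x = NΛ b x := by
          rw [hNΛ.smul_eq, hGx, one_mul]
        have h6 : Mₗ.smul (koopman φ G) b = Mₗ.smul (koopman φ G) (T (M.smul G' s - s)) := by
          rw [hb]
          simp only [map_sub]
          rw [← Mₗ.mul_smul, hkoop]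
        have hGr : M.smul G (s - M.smul G' s) = 0 := by
          rw [map_sub, ← M.mul_smul, hGG', sub_self]
        have hNr : NΓ (s - M.smul G' s) y = 0 := by
          have := hNΓ.smul_eq G (s - M.smul G' s) y
          rw [hGr, hNΓ.N_zero y, hGy] at this
          simpa using this.symm
        have hNr' : NΓ (M.smul G' s - s) y = 0 := by
          have heq : M.smul G' s - s = (-1 : 𝕜) • (s - M.smul G' s) := by
            rw [neg_one_smul]; abel
          rw [heq]
          have hle := hNΓ.smul_scalar_le hM (-1 : 𝕜) (s - M.smul G' s) y
          rw [hNr, mul_zero] at hle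
          exact le_antisymm hle (hNΓ.nonneg _ y)
        have hle : NΛ (T (M.smul G' s - s)) x ≤ 0 := by
          have := h4 (M.smul G' s - s) x
          rw [← hy, hNr', mul_zero] at this
          exact this
        rw [← h5, h6, hNΛ.smul_eq, hGx, one_mul]
        exact le_antisymm hle (hNΛ.nonneg _ x)
      have hble : NΛ (c • b) x ≤ 0 := by
        have := hNΛ.smul_scalar_le hMₗ c b x
        rw [hterm_b, mul_zero] at this
        exact this
      calc NΛ u x ≤ NΛ (T (M.smul (f - c • G') s)) x + NΛ (c • b) x
            + NΛ (Mₗ.smul (koopman φ (c • G' - f)) (T s)) x := by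
            exact le_trans hsub (add_le_add_left hsub2 _)
      _ ≤ 0 + 0 + 0 := by
            rw [hterm_a, hterm_c]
            exact add_le_add (add_le_add le_rfl hble) le_rfl
      _ = 0 := by ring
    have hnorm : ‖u‖ ≤ 0 := by
      rw [← hNΛ.sup_eq_norm]
      exact Real.iSup_le hpt le_rfl
    have : u = 0 := norm_le_zero_iff.mp hnorm
    rw [hu] at this
    exact sub_eq_zero.mp this
  tfae_finish


end
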